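/- Let Υ ∈ M₃(ℝ) be symmetric, let k_p, k_I > 0, let V : ℝ → SO(3) be continuous, and let x, θ : ℝ → ℝ³ be differentiable functions satisfying the linear time-varying system ẋ(t) = Υ x(t) + V(t)ᵀ θ(t), θ̇(t) = 2 (k_I/k_p) V(t) Υ x(t). Then the Chetaev function V(x, θ) = (k_I/(2 k_p)) xᵀ Υ x − (1/4) ‖θ‖² satisfies, along the solution, d/dt V(x(t), θ(t)) = (k_I/k_p) ‖Υ x(t)‖² ≥ 0 for all t. -/

import Mathlib

open Matrix

noncomputable section

def SO3 : Set (Matrix (Fin 3) (Fin 3) ℝ) := {R | Rᵀ * R = 1 ∧ R.det = 1}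

/-
The computation is the usual one for a Chetaev function: since `Υ` is symmetric,
`d/dt (xᵀΥx) = 2 (Υx)ᵀẋ` and `d/dt ‖θ‖² = 2 θᵀθ̇`. Substituting the dynamics, the coupling
terms `(k_I/k_p) (Υx)ᵀVᵀθ` and `(k_I/k_p) θᵀVΥx` are equal and cancel, leaving
`(k_I/k_p) ‖Υx‖²`.
-/

theorem dotProduct_self_nonneg {R n : Type*} [Fintype n] [Ring R] [LinearOrder R]
    [IsStrictOrderedRing R] (v : n → R) : 0 ≤ v ⬝ᵥ v :=
  Finset.sum_nonneg fun i _ => mul_self_nonneg (v i)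

section Calculus

variable {𝕜 n : Type*} [NontriviallyNormedField 𝕜] [Fintype n]
  {f g : 𝕜 → n → 𝕜} {f' g' : n → 𝕜} {t : 𝕜}

theorem HasDerivAt.dotProduct (hf : HasDerivAt f f' t) (hg : HasDerivAt g g' t) :
    HasDerivAt (fun s => f s ⬝ᵥ g s) (f' ⬝ᵥ g t + f t ⬝ᵥ g') t := by
  simp only [_root_.dotProduct, ← Finset.sum_add_distrib]
  exact HasDerivAt.fun_sum fun i _ =>
    (hasDerivAt_pi.mp hf i).mul (hasDerivAt_pi.mp hg i)

theorem HasDerivAt.const_mulVec {m : Type*} [Fintype m] (A : Matrix m n 𝕜)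
    (hf : HasDerivAt f f' t) : HasDerivAt (fun s => A *ᵥ f s) (A *ᵥ f') t :=
  hasDerivAt_pi.mpr fun i => by
    simpa only [mulVec, _root_.dotProduct] using
      HasDerivAt.fun_sum fun j _ => (hasDerivAt_pi.mp hf j).const_mul (A i j)

theorem HasDerivAt.dotProduct_self (hf : HasDerivAt f f' t) :
    HasDerivAt (fun s => f s ⬝ᵥ f s) (2 * (f t ⬝ᵥ f')) t :=
  (hf.dotProduct hf).congr_deriv <| by rw [dotProduct_comm f', two_mul]

theorem HasDerivAt.quadraticForm_of_isSymm {A : Matrix n n 𝕜} (hA : A.IsSymm)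
    (hf : HasDerivAt f f' t) :
    HasDerivAt (fun s => f s ⬝ᵥ (A *ᵥ f s)) (2 * ((A *ᵥ f t) ⬝ᵥ f')) t :=
  (hf.dotProduct (hf.const_mulVec A)).congr_deriv <| by
    have hself : f t ⬝ᵥ (A *ᵥ f') = (A *ᵥ f t) ⬝ᵥ f' := by
      rw [← hA.eq, dotProduct_transpose_mulVec, dotProduct_comm, hA.eq]
    rw [hself, dotProduct_comm f', two_mul]

end Calculus

theorem chetaev_function_derivative_general
    (Υ : Matrix (Fin 3) (Fin 3) ℝ) (hΥ : Υᵀ = Υ)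
    (kp kI : ℝ) (hkp : 0 < kp) (hkI : 0 < kI)
    (V : ℝ → Matrix (Fin 3) (Fin 3) ℝ)
    (x θ : ℝ → Fin 3 → ℝ)
    (hx : ∀ t, HasDerivAt x (Υ *ᵥ x t + (V t)ᵀ *ᵥ θ t) t)
    (hθ : ∀ t, HasDerivAt θ ((2 * (kI / kp)) • (V t *ᵥ (Υ *ᵥ x t))) t) :
    ∀ t, HasDerivAt
        (fun s => (kI / (2 * kp)) * (x s ⬝ᵥ (Υ *ᵥ x s)) - (1 / 4) * (θ s ⬝ᵥ θ s))
        ((kI / kp) * ((Υ *ᵥ x t) ⬝ᵥ (Υ *ᵥ x t))) t ∧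
      0 ≤ (kI / kp) * ((Υ *ᵥ x t) ⬝ᵥ (Υ *ᵥ x t)) := by
  intro t
  refine ⟨?_, by have := dotProduct_self_nonneg (Υ *ᵥ x t); positivity⟩
  have hquad := (hx t).quadraticForm_of_isSymm hΥ
  have hnorm := (hθ t).dotProduct_self
  have hcoupling : (Υ *ᵥ x t) ⬝ᵥ ((V t)ᵀ *ᵥ θ t) = θ t ⬝ᵥ (V t *ᵥ (Υ *ᵥ x t)) :=
    dotProduct_transpose_mulVec _ _ _
  refine ((hquad.const_mul _).sub (hnorm.const_mul _)).congr_deriv ?_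
  rw [dotProduct_add, dotProduct_smul, hcoupling, smul_eq_mul]
  ring

/-- **Derivative of the Chetaev function along the linearized dynamics.**
For `ẋ = Υx + Vᵀθ`, `θ̇ = 2(k_I/k_p) V Υ x` with `Υ` symmetric and `V(t) ∈ SO(3)`,
the Chetaev function `𝒱(x,θ) = (k_I/(2k_p)) xᵀΥx − ¼‖θ‖²` satisfies
`d/dt 𝒱(x(t),θ(t)) = (k_I/k_p)‖Υx(t)‖² ≥ 0`. -/
theorem chetaev_function_derivative
    (Υ : Matrix (Fin 3) (Fin 3) ℝ) (hΥ : Υᵀ = Υ)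
    (kp kI : ℝ) (hkp : 0 < kp) (hkI : 0 < kI)
    (V : ℝ → Matrix (Fin 3) (Fin 3) ℝ)
    (hV : ∀ t, V t ∈ SO3) (hVcont : Continuous V)
    (x θ : ℝ → Fin 3 → ℝ)
    (hx : ∀ t, HasDerivAt x (Υ *ᵥ x t + (V t)ᵀ *ᵥ θ t) t)
    (hθ : ∀ t, HasDerivAt θ ((2 * (kI / kp)) • (V t *ᵥ (Υ *ᵥ x t))) t) :
    ∀ t, HasDerivAt
        (fun s => (kI / (2 * kp)) * (x s ⬝ᵥ (Υ *ᵥ x s)) - (1 / 4) * (θ s ⬝ᵥ θ s))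
        ((kI / kp) * ((Υ *ᵥ x t) ⬝ᵥ (Υ *ᵥ x t))) t ∧
      0 ≤ (kI / kp) * ((Υ *ᵥ x t) ⬝ᵥ (Υ *ᵥ x t)) :=
  chetaev_function_derivative_general Υ hΥ kp kI hkp hkI V x θ hx hθ
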